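/- For every compact subinterval [a,b] ⊂ (0, √3/2) there exists ε > 0 such that for every r ∈ [a,b] one has ε ≤ (1−2δ_r)/π, r + ε < √3/2, and for all s with r < s ≤ r + ε the inequality (1/2)·arcsin(π·(s−r)/(1−2δ_r)) < (π/2)·∫_r^s dτ/(1−2δ_τ) holds. -/

import Mathlib

open MeasureTheory

/-- `δ_τ = τ · tan((1/2)·arctan(2τ))`. -/
noncomputable def delta (t : ℝ) : ℝ := t * Real.tan ((1/2) * Real.arctan (2*t))

/-!
Write `D τ = 1 - 2δ_τ = 2 - √(1 + 4τ²)`. On `[0, √3/2)` the function `D` decreases from `1`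
towards `0`, and `1/D` grows at rate at least `2τ`. Hence `y = π ∫_r^s 1/D` exceeds
`x = π (s - r) / D r` by at least `π r (s - r)²`, while `y ≤ π (s - r) / D s`. Since
`arcsin x < y` as soon as `x ≤ y - y³/6`, it suffices that the quadratic gain beats the cubic
`y³/6`, which holds once `s - r` is small compared with `r · D(s)³`; on `[a, b]` these
quantities are bounded below uniformly.
-/

open Real

theorem Real.tan_mul_one_add_cos_two_mul (x : ℝ) :
    tan x * (1 + cos (2 * x)) = sin (2 * x) := by
  rw [tan_eq_sin_div_cos, cos_two_mul, sin_two_mul]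
  by_cases hx : cos x = 0
  · simp [hx]
  · field_simp; ring

theorem Real.arcsin_lt_of_le_sub_cube {x y : ℝ} (hy0 : 0 < y) (hy : y ≤ π / 2)
    (hxy : x ≤ y - y ^ 3 / 6) : arcsin x < y :=
  (arcsin_lt_iff_lt_sin' ⟨by linarith [pi_pos], hy⟩).2 (hxy.trans_lt (sin_gt_sub_cube hy0))

theorem delta_eq (t : ℝ) : delta t = (√(1 + 4 * t ^ 2) - 1) / 2 := by
  set x := (1 / 2) * arctan (2 * t)
  set u := √(1 + 4 * t ^ 2)
  have hu : u ^ 2 = 1 + 4 * t ^ 2 := sq_sqrt (by positivity)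
  have hu0 : 0 < u := by positivity
  have htan : tan x * (1 + 1 / u) = 2 * t / u := by
    have h := tan_mul_one_add_cos_two_mul x
    rwa [show 2 * x = arctan (2 * t) by ring, cos_arctan, sin_arctan,
      show (1 : ℝ) + (2 * t) ^ 2 = 1 + 4 * t ^ 2 by ring] at h
  have htan' : tan x * (u + 1) = 2 * t := by
    field_simp at htan; linarith
  refine mul_right_cancel₀ (by positivity : u + 1 ≠ 0) ?_
  rw [delta, mul_assoc, htan']
  linear_combination -hu / 2

theorem one_sub_two_mul_delta (t : ℝ) : 1 - 2 * delta t = 2 - √(1 + 4 * t ^ 2) := by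
  rw [delta_eq]; ring

@[fun_prop]
theorem continuous_delta : Continuous delta := by
  simp only [funext delta_eq]; fun_prop

theorem one_sub_two_mul_delta_le_one (t : ℝ) : 1 - 2 * delta t ≤ 1 := by
  rw [one_sub_two_mul_delta]
  have h : (1 : ℝ) ≤ 1 + 4 * t ^ 2 := le_add_of_nonneg_right (by positivity)
  linarith [one_le_sqrt.2 h]

theorem one_sub_two_mul_delta_pos {t : ℝ} (h0 : 0 ≤ t) (ht : t < √3 / 2) :
    0 < 1 - 2 * delta t := by
  rw [one_sub_two_mul_delta, sub_pos, sqrt_lt' two_pos]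
  nlinarith [sq_sqrt (show (0 : ℝ) ≤ 3 by norm_num)]

theorem one_sub_two_mul_delta_antitoneOn :
    AntitoneOn (fun t => 1 - 2 * delta t) (Set.Ici 0) := by
  intro s hs t _ hst
  simp only [one_sub_two_mul_delta, sub_le_sub_iff_left]
  gcongr

theorem inv_one_sub_two_mul_delta_add_le {r τ : ℝ} (hr : 0 ≤ r) (hrτ : r ≤ τ)
    (hτ : τ < √3 / 2) :
    1 / (1 - 2 * delta r) + 2 * r * (τ - r) ≤ 1 / (1 - 2 * delta τ) := by
  have hDr := one_sub_two_mul_delta_pos hr (hrτ.trans_lt hτ)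
  have hDτ := one_sub_two_mul_delta_pos (hr.trans hrτ) hτ
  have hDr1 := one_sub_two_mul_delta_le_one r
  have hDτ1 := one_sub_two_mul_delta_le_one τ
  -- `√(1 + 4τ²) - √(1 + 4r²)` is `4(τ² - r²)` divided by a sum of two square roots below `2`.
  have hgap : 2 * r * (τ - r) ≤ (1 - 2 * delta r) - (1 - 2 * delta τ) := by
    have hP := sq_sqrt (by positivity : (0 : ℝ) ≤ 1 + 4 * τ ^ 2)
    have hQ := sq_sqrt (by positivity : (0 : ℝ) ≤ 1 + 4 * r ^ 2)
    have hPQ : √(1 + 4 * r ^ 2) ≤ √(1 + 4 * τ ^ 2) := by gcongr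
    simp only [one_sub_two_mul_delta] at hDr hDτ ⊢
    have hsum : √(1 + 4 * τ ^ 2) + √(1 + 4 * r ^ 2) ≤ 4 := by linarith
    nlinarith [mul_nonneg (sub_nonneg.2 hPQ) (sub_nonneg.2 hsum), mul_nonneg (sub_nonneg.2 hrτ) hr]
  -- Dividing the gap by `(1 - 2δ r)(1 - 2δ τ) ≤ 1` only enlarges it.
  rw [div_add' _ _ _ hDr.ne', div_le_div_iff₀ hDr hDτ]
  nlinarith [mul_nonneg (mul_nonneg hr (sub_nonneg.2 hrτ))
    (sub_nonneg.2 (mul_le_one₀ hDr1 hDτ.le hDτ1))]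

theorem intervalIntegrable_inv_one_sub_two_mul_delta {r s : ℝ} (hr : 0 ≤ r) (hrs : r ≤ s)
    (hs : s < √3 / 2) :
    IntervalIntegrable (fun τ => 1 / (1 - 2 * delta τ)) volume r s := by
  refine ContinuousOn.intervalIntegrable ?_
  rw [Set.uIcc_of_le hrs]
  refine continuousOn_const.div (by fun_prop) fun τ hτ => ?_
  exact (one_sub_two_mul_delta_pos (hr.trans hτ.1) (hτ.2.trans_lt hs)).ne'

theorem integral_inv_one_sub_two_mul_delta_le {r s : ℝ} (hr : 0 ≤ r) (hrs : r ≤ s)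
    (hs : s < √3 / 2) :
    ∫ τ in r..s, 1 / (1 - 2 * delta τ) ≤ (s - r) / (1 - 2 * delta s) := by
  have h := intervalIntegral.integral_mono_on hrs
    (intervalIntegrable_inv_one_sub_two_mul_delta hr hrs hs) intervalIntegrable_const
    fun τ hτ => one_div_le_one_div_of_le (one_sub_two_mul_delta_pos (hr.trans hrs) hs)
      (one_sub_two_mul_delta_antitoneOn (hr.trans hτ.1) (hr.trans hrs) hτ.2)
  rwa [intervalIntegral.integral_const, smul_eq_mul, ← div_eq_mul_one_div] at h

theorem le_integral_inv_one_sub_two_mul_delta {r s : ℝ} (hr : 0 ≤ r) (hrs : r ≤ s)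
    (hs : s < √3 / 2) :
    (s - r) / (1 - 2 * delta r) + r * (s - r) ^ 2 ≤ ∫ τ in r..s, 1 / (1 - 2 * delta τ) := by
  have hlin : IntervalIntegrable (fun τ => 1 / (1 - 2 * delta r) + 2 * r * (τ - r)) volume r s :=
    Continuous.intervalIntegrable (by fun_prop) _ _
  have h := intervalIntegral.integral_mono_on hrs hlin
    (intervalIntegrable_inv_one_sub_two_mul_delta hr hrs hs)
    fun τ hτ => inv_one_sub_two_mul_delta_add_le hr hτ.1 (hτ.2.trans_lt hs)
  convert h using 1
  rw [intervalIntegral.integral_add intervalIntegrable_const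
      (Continuous.intervalIntegrable (by fun_prop) _ _),
    intervalIntegral.integral_const_mul, intervalIntegral.integral_comp_sub_right (fun x => x)]
  simp only [intervalIntegral.integral_const, smul_eq_mul, sub_self, integral_id]
  ring

theorem half_arcsin_lt_half_pi_mul_integral {r s : ℝ} (hr : 0 ≤ r) (hrs : r < s)
    (hs : s < √3 / 2) (hπ : π * (s - r) ≤ 1 - 2 * delta s)
    (hπ2 : π ^ 2 * (s - r) ≤ 6 * r * (1 - 2 * delta s) ^ 3) :
    1 / 2 * arcsin (π * (s - r) / (1 - 2 * delta r)) <
      π / 2 * ∫ τ in r..s, 1 / (1 - 2 * delta τ) := by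
  have hDr := one_sub_two_mul_delta_pos hr (hrs.trans hs)
  have hDs := one_sub_two_mul_delta_pos (hr.trans hrs.le) hs
  have hlower := mul_le_mul_of_nonneg_left
    (le_integral_inv_one_sub_two_mul_delta hr hrs.le hs) pi_pos.le
  have hupper := mul_le_mul_of_nonneg_left
    (integral_inv_one_sub_two_mul_delta_le hr hrs.le hs) pi_pos.le
  rw [mul_add, ← mul_div_assoc] at hlower
  rw [← mul_div_assoc] at hupper
  set x := π * (s - r) / (1 - 2 * delta r)
  set y := π * ∫ τ in r..s, 1 / (1 - 2 * delta τ) with hy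
  have hx : 0 < x := div_pos (mul_pos pi_pos (sub_pos.2 hrs)) hDr
  have hgain : 0 ≤ π * (r * (s - r) ^ 2) := by positivity
  have hcube : y ^ 3 / 6 ≤ π * (r * (s - r) ^ 2) := by
    calc y ^ 3 / 6 ≤ (π * (s - r) / (1 - 2 * delta s)) ^ 3 / 6 := by gcongr; linarith
      _ ≤ π * (r * (s - r) ^ 2) := by
        rw [div_pow, div_div, div_le_iff₀ (by positivity)]
        nlinarith [mul_le_mul_of_nonneg_left hπ2 (by positivity : 0 ≤ π * (s - r) ^ 2)]
  have hy1 : y ≤ π / 2 :=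
    calc y ≤ 1 := hupper.trans ((div_le_one hDs).2 hπ)
      _ ≤ π / 2 := by linarith [pi_gt_three]
  calc 1 / 2 * arcsin x < 1 / 2 * y := by
        gcongr; exact arcsin_lt_of_le_sub_cube (by linarith) hy1 (by linarith)
    _ = π / 2 * ∫ τ in r..s, 1 / (1 - 2 * delta τ) := by rw [hy]; ring

theorem arcsin_bound_beats_integral_bound_uniformly (a b : ℝ) (ha : 0 < a) (hab : a ≤ b)
    (hb : b < Real.sqrt 3 / 2) :
    ∃ ε > 0, ∀ r ∈ Set.Icc a b,
      ε ≤ (1 - 2 * delta r) / Real.pi ∧ r + ε < Real.sqrt 3 / 2 ∧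
        ∀ s, r < s → s ≤ r + ε →
          (1/2) * Real.arcsin (Real.pi * (s - r) / (1 - 2 * delta r)) <
            (Real.pi/2) * (∫ τ in r..s, 1/(1 - 2 * delta τ)) := by
  obtain ⟨b', hbb', hb'⟩ := exists_between hb
  set L := 1 - 2 * delta b'
  have hL : 0 < L := one_sub_two_mul_delta_pos (by linarith) hb'
  have hLle {t : ℝ} (h0 : a ≤ t) (h1 : t ≤ b') : L ≤ 1 - 2 * delta t :=
    one_sub_two_mul_delta_antitoneOn (ha.le.trans h0) (ha.le.trans (h0.trans h1)) h1
  set ε := min (b' - b) (min (L / π) (6 * a * L ^ 3 / π ^ 2))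
  have hε₁ : ε ≤ b' - b := min_le_left _ _
  have hε₂ : π * ε ≤ L :=
    (le_div_iff₀' pi_pos).1 ((min_le_right _ _).trans (min_le_left _ _))
  have hε₃ : π ^ 2 * ε ≤ 6 * a * L ^ 3 :=
    (le_div_iff₀' (by positivity)).1 ((min_le_right _ _).trans (min_le_right _ _))
  refine ⟨ε, lt_min (by linarith) (lt_min (by positivity) (by positivity)), ?_⟩
  rintro r ⟨har, hrb⟩
  refine ⟨(le_div_iff₀' pi_pos).2 (hε₂.trans (hLle har (by linarith))), by linarith, ?_⟩
  intro s hrs hsr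
  have hLs : L ≤ 1 - 2 * delta s := hLle (har.trans hrs.le) (by linarith)
  refine half_arcsin_lt_half_pi_mul_integral (by linarith) hrs (by linarith) ?_ ?_
  · calc π * (s - r) ≤ π * ε := by gcongr; linarith
      _ ≤ 1 - 2 * delta s := hε₂.trans hLs
  · calc π ^ 2 * (s - r) ≤ π ^ 2 * ε := by gcongr; linarith
      _ ≤ 6 * a * L ^ 3 := hε₃
      _ ≤ 6 * r * (1 - 2 * delta s) ^ 3 := by gcongr; linarith
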